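/- Let $\Theta = \mathbb{R}^d$, let $\lambda > 0$, let $(A_t, y_t)_{t=1}^n$ be arbitrary with $A_t \in \mathbb{R}^d$, $y_t \in \mathbb{R}$. Define $\ell_t(\theta) = \frac{1}{2}(A_t^\top \theta - y_t)^2$, $V_t = \lambda I + \sum_{s=1}^{t} A_s A_s^\top$, and let $\hat{\theta}_t = \arg\min_\theta \big(\frac{\lambda}{2}\|\theta\|_2^2 + \sum_{s=1}^{t} \ell_s(\theta)\big)$ be the ridge regression estimator (with $\hat{\theta}_0 = 0$). Then for any $\theta^* \in \mathbb{R}^d$, $\sum_{t=1}^n \big(\ell_t(\hat{\theta}_{t-1}) - \ell_t(\theta^*)\big) = \frac{\lambda}{2}\|\theta^*\|_2^2 + \sum_{t=1}^n \ell_t(\hat{\theta}_{t-1}) \|A_t\|_{V_t^{-1}}^2 - \frac{1}{2}\|\hat{\theta}_n - \theta^*\|_{V_n}^2$. -/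

import Mathlib

/-!
The ridge objective `F_t(θ) = λ/2 ‖θ‖² + ∑_{s ≤ t} ℓ_s(θ)` is a quadratic with Hessian `V_t`, so
at its minimiser `θ̂_t` it satisfies `V_t θ̂_t = b_t := ∑_{s ≤ t} y_s A_s` and
`F_t(θ) = F_t(θ̂_t) + ½ ‖θ - θ̂_t‖²_{V_t}` exactly. Comparing the minimisers of `F_t` and
`F_{t+1} = F_t + ℓ_{t+1}` gives
`V_{t+1} (θ̂_t - θ̂_{t+1}) = (A_{t+1}ᵀ θ̂_t - y_{t+1}) A_{t+1}`, hence
`F_{t+1}(θ̂_{t+1}) = F_t(θ̂_t) + ℓ_{t+1}(θ̂_t) (1 - ‖A_{t+1}‖²_{V_{t+1}⁻¹})`. Telescoping from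
`F_0(θ̂_0) = 0` and expanding `F_n(θ*)` around `θ̂_n` yields the identity.
-/

open Matrix Finset

section Quadratic

variable {ι : Type*} [Fintype ι]

noncomputable def quadraticObjective (M : Matrix ι ι ℝ) (b θ : ι → ℝ) : ℝ :=
  1 / 2 * (θ ⬝ᵥ (M *ᵥ θ)) - b ⬝ᵥ θ

variable {M : Matrix ι ι ℝ} {b : ι → ℝ}

lemma quadraticObjective_add (hM : M.IsSymm) (x h : ι → ℝ) :
    quadraticObjective M b (x + h) =
      quadraticObjective M b x + h ⬝ᵥ (M *ᵥ x - b) + 1 / 2 * (h ⬝ᵥ (M *ᵥ h)) := by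
  have hsymm : x ⬝ᵥ (M *ᵥ h) = h ⬝ᵥ (M *ᵥ x) := by
    rw [← dotProduct_transpose_mulVec, hM.eq]
  simp only [quadraticObjective, mulVec_add, dotProduct_add, add_dotProduct, dotProduct_sub,
    hsymm, dotProduct_comm b h]
  ring

lemma mulVec_eq_of_isMin_quadraticObjective (hM : M.IsSymm) {x : ι → ℝ}
    (hx : ∀ θ, quadraticObjective M b x ≤ quadraticObjective M b θ) : M *ᵥ x = b := by
  set g := M *ᵥ x - b
  -- `q (x + ε • g) - q x = ε ‖g‖² + ε² (g ⬝ M g) / 2 ≥ 0` for all `ε`,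
  -- so the discriminant `‖g‖⁴` is `≤ 0`
  have hray : ∀ ε : ℝ, 0 ≤ (1 / 2 * (g ⬝ᵥ (M *ᵥ g))) * (ε * ε) + (g ⬝ᵥ g) * ε + 0 := by
    intro ε
    have := hx (x + ε • g)
    rw [quadraticObjective_add hM, mulVec_smul, smul_dotProduct, smul_dotProduct,
      dotProduct_smul, smul_eq_mul, smul_eq_mul, smul_eq_mul] at this
    linarith
  have hdisc := discrim_le_zero hray
  rw [discrim, mul_zero, sub_zero] at hdisc
  have hg : g ⬝ᵥ g = 0 := pow_eq_zero_iff two_ne_zero |>.mp (le_antisymm hdisc (sq_nonneg _))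
  exact sub_eq_zero.mp (dotProduct_self_eq_zero.mp hg)

lemma quadraticObjective_eq_add_of_isMin (hM : M.IsSymm) {x : ι → ℝ}
    (hx : ∀ θ, quadraticObjective M b x ≤ quadraticObjective M b θ) (θ : ι → ℝ) :
    quadraticObjective M b θ =
      quadraticObjective M b x + 1 / 2 * ((θ - x) ⬝ᵥ (M *ᵥ (θ - x))) := by
  have := quadraticObjective_add (b := b) hM x (θ - x)
  rwa [add_sub_cancel, mulVec_eq_of_isMin_quadraticObjective hM hx, sub_self, dotProduct_zero,
    add_zero] at this

end Quadratic

lemma dotProduct_mulVec_self_of_mulVec_eq {ι : Type*} [Fintype ι] [DecidableEq ι]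
    {M : Matrix ι ι ℝ} (hM : IsUnit M) {v w : ι → ℝ} (h : M *ᵥ v = w) :
    v ⬝ᵥ (M *ᵥ v) = w ⬝ᵥ (M⁻¹ *ᵥ w) := by
  subst h
  rw [mulVec_mulVec, nonsing_inv_mul _ ((isUnit_iff_isUnit_det M).mp hM), one_mulVec,
    dotProduct_comm]

section Ridge

variable {ι : Type*} (lam : ℝ) (A : ℕ → ι → ℝ) (y : ℕ → ℝ)

noncomputable def sqLoss [Fintype ι] (t : ℕ) (θ : ι → ℝ) : ℝ := 1 / 2 * (A t ⬝ᵥ θ - y t) ^ 2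

noncomputable def ridgeObjective [Fintype ι] (t : ℕ) (θ : ι → ℝ) : ℝ :=
  lam / 2 * (θ ⬝ᵥ θ) + ∑ s ∈ Icc 1 t, sqLoss A y s θ

def ridgeGram [Fintype ι] [DecidableEq ι] (t : ℕ) : Matrix ι ι ℝ :=
  lam • 1 + ∑ s ∈ Icc 1 t, vecMulVec (A s) (A s)

def ridgeTarget (t : ℕ) : ι → ℝ := ∑ s ∈ Icc 1 t, y s • A s

lemma ridgeObjective_succ [Fintype ι] (t : ℕ) (θ : ι → ℝ) :
    ridgeObjective lam A y (t + 1) θ = ridgeObjective lam A y t θ + sqLoss A y (t + 1) θ := by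
  rw [ridgeObjective, ridgeObjective, sum_Icc_succ_top (by omega), add_assoc]

lemma ridgeGram_succ [Fintype ι] [DecidableEq ι] (t : ℕ) :
    ridgeGram lam A (t + 1) = ridgeGram lam A t + vecMulVec (A (t + 1)) (A (t + 1)) := by
  rw [ridgeGram, ridgeGram, sum_Icc_succ_top (by omega), add_assoc]

lemma ridgeTarget_succ (t : ℕ) :
    ridgeTarget A y (t + 1) = ridgeTarget A y t + y (t + 1) • A (t + 1) :=
  sum_Icc_succ_top (by omega) _

lemma dotProduct_ridgeGram_mulVec [Fintype ι] [DecidableEq ι] (t : ℕ) (u v : ι → ℝ) :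
    u ⬝ᵥ (ridgeGram lam A t *ᵥ v) = lam * (u ⬝ᵥ v) + ∑ s ∈ Icc 1 t, (A s ⬝ᵥ u) * (A s ⬝ᵥ v) := by
  simp only [ridgeGram, add_mulVec, smul_mulVec, one_mulVec, dotProduct_add, dotProduct_smul,
    smul_eq_mul, Matrix.sum_mulVec, dotProduct_sum, vecMulVec_mulVec, op_smul_eq_mul]
  refine congrArg _ (sum_congr rfl fun s _ => ?_)
  rw [dotProduct_comm u, mul_comm]

lemma ridgeTarget_dotProduct [Fintype ι] (t : ℕ) (v : ι → ℝ) :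
    ridgeTarget A y t ⬝ᵥ v = ∑ s ∈ Icc 1 t, y s * (A s ⬝ᵥ v) := by
  simp only [ridgeTarget, sum_dotProduct, smul_dotProduct, smul_eq_mul]

lemma ridgeObjective_eq_quadraticObjective [Fintype ι] [DecidableEq ι] (t : ℕ) (θ : ι → ℝ) :
    ridgeObjective lam A y t θ =
      quadraticObjective (ridgeGram lam A t) (ridgeTarget A y t) θ +
        1 / 2 * ∑ s ∈ Icc 1 t, y s ^ 2 := by
  rw [ridgeObjective, quadraticObjective, dotProduct_ridgeGram_mulVec, ridgeTarget_dotProduct]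
  have hsq : ∀ s, 1 / 2 * (A s ⬝ᵥ θ - y s) ^ 2 =
      1 / 2 * ((A s ⬝ᵥ θ) * (A s ⬝ᵥ θ)) - y s * (A s ⬝ᵥ θ) + 1 / 2 * y s ^ 2 := fun s => by ring
  simp only [sqLoss, hsq, sum_add_distrib, sum_sub_distrib, ← mul_sum]
  ring

lemma ridgeGram_posDef [Fintype ι] [DecidableEq ι] (hlam : 0 < lam) (t : ℕ) :
    (ridgeGram lam A t).PosDef :=
  (PosDef.one.smul hlam).add_posSemidef
    (posSemidef_sum _ fun s _ => by simpa using posSemidef_vecMulVec_self_star (A s))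

lemma ridgeGram_isSymm [Fintype ι] [DecidableEq ι] (t : ℕ) : (ridgeGram lam A t).IsSymm := by
  simp only [IsSymm, ridgeGram, transpose_add, transpose_smul, transpose_one, transpose_sum,
    transpose_vecMulVec]

variable {lam A y} [Fintype ι] [DecidableEq ι] {t : ℕ} {x : ι → ℝ}

lemma isMin_quadraticObjective_of_isMin_ridgeObjective
    (hx : ∀ θ, ridgeObjective lam A y t x ≤ ridgeObjective lam A y t θ) (θ : ι → ℝ) :
    quadraticObjective (ridgeGram lam A t) (ridgeTarget A y t) x ≤
      quadraticObjective (ridgeGram lam A t) (ridgeTarget A y t) θ := by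
  simpa only [ridgeObjective_eq_quadraticObjective, add_le_add_iff_right] using hx θ

lemma ridgeGram_mulVec_eq_of_isMin
    (hx : ∀ θ, ridgeObjective lam A y t x ≤ ridgeObjective lam A y t θ) :
    ridgeGram lam A t *ᵥ x = ridgeTarget A y t :=
  mulVec_eq_of_isMin_quadraticObjective (ridgeGram_isSymm lam A t)
    (isMin_quadraticObjective_of_isMin_ridgeObjective hx)

lemma ridgeObjective_eq_add_of_isMin
    (hx : ∀ θ, ridgeObjective lam A y t x ≤ ridgeObjective lam A y t θ) (θ : ι → ℝ) :
    ridgeObjective lam A y t θ =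
      ridgeObjective lam A y t x + 1 / 2 * ((θ - x) ⬝ᵥ (ridgeGram lam A t *ᵥ (θ - x))) := by
  rw [ridgeObjective_eq_quadraticObjective, ridgeObjective_eq_quadraticObjective,
    quadraticObjective_eq_add_of_isMin (ridgeGram_isSymm lam A t)
      (isMin_quadraticObjective_of_isMin_ridgeObjective hx)]
  ring

lemma ridgeObjective_succ_of_isMin (hlam : 0 < lam) {x' : ι → ℝ}
    (hx : ∀ θ, ridgeObjective lam A y t x ≤ ridgeObjective lam A y t θ)
    (hx' : ∀ θ, ridgeObjective lam A y (t + 1) x' ≤ ridgeObjective lam A y (t + 1) θ) :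
    ridgeObjective lam A y (t + 1) x' =
      ridgeObjective lam A y t x + sqLoss A y (t + 1) x
        - sqLoss A y (t + 1) x * (A (t + 1) ⬝ᵥ ((ridgeGram lam A (t + 1))⁻¹ *ᵥ A (t + 1))) := by
  set r := A (t + 1) ⬝ᵥ x - y (t + 1)
  have hstep : ridgeGram lam A (t + 1) *ᵥ (x - x') = r • A (t + 1) := by
    rw [mulVec_sub, ridgeGram_mulVec_eq_of_isMin hx', ridgeGram_succ, add_mulVec,
      ridgeGram_mulVec_eq_of_isMin hx, vecMulVec_mulVec, op_smul_eq_smul, ridgeTarget_succ]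
    module
  have hquad := dotProduct_mulVec_self_of_mulVec_eq
    (ridgeGram_posDef lam A hlam (t + 1)).isUnit hstep
  rw [smul_dotProduct, mulVec_smul, dotProduct_smul, smul_eq_mul, smul_eq_mul] at hquad
  have hmin := ridgeObjective_eq_add_of_isMin hx' x
  have hloss : sqLoss A y (t + 1) x = 1 / 2 * r ^ 2 := rfl
  rw [ridgeObjective_succ, hquad] at hmin
  rw [hloss] at hmin ⊢
  linear_combination -hmin

lemma ridgeObjective_eq_sum_of_isMin (hlam : 0 < lam) {x : ℕ → ι → ℝ} (hx₀ : x 0 = 0)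
    (hx : ∀ t θ, ridgeObjective lam A y t (x t) ≤ ridgeObjective lam A y t θ) (n : ℕ) :
    ridgeObjective lam A y n (x n) = ∑ t ∈ Icc 1 n, (sqLoss A y t (x (t - 1))
      - sqLoss A y t (x (t - 1)) * (A t ⬝ᵥ ((ridgeGram lam A t)⁻¹ *ᵥ A t))) := by
  induction n with
  | zero => simp [ridgeObjective, hx₀]
  | succ n ih =>
    rw [ridgeObjective_succ_of_isMin hlam (hx n) (hx (n + 1)), ih,
      sum_Icc_succ_top (by omega), Nat.add_sub_cancel]
    ring

theorem ridge_regret_eq (hlam : 0 < lam) {x : ℕ → ι → ℝ} (hx₀ : x 0 = 0)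
    (hx : ∀ t θ, ridgeObjective lam A y t (x t) ≤ ridgeObjective lam A y t θ)
    (θstar : ι → ℝ) (n : ℕ) :
    ∑ t ∈ Icc 1 n, (sqLoss A y t (x (t - 1)) - sqLoss A y t θstar) =
      lam / 2 * (θstar ⬝ᵥ θstar)
        + ∑ t ∈ Icc 1 n, sqLoss A y t (x (t - 1)) * (A t ⬝ᵥ ((ridgeGram lam A t)⁻¹ *ᵥ A t))
        - 1 / 2 * ((x n - θstar) ⬝ᵥ (ridgeGram lam A n *ᵥ (x n - θstar))) := by
  have hstar := ridgeObjective_eq_add_of_isMin (hx n) θstar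
  rw [← neg_sub, mulVec_neg, dotProduct_neg, neg_dotProduct, neg_neg,
    ridgeObjective_eq_sum_of_isMin hlam hx₀ hx n, ridgeObjective] at hstar
  rw [sum_sub_distrib] at hstar ⊢
  linear_combination -hstar

end Ridge

theorem stmt_11 (d n : ℕ) (lam : ℝ) (hlam : 0 < lam)
    (A : ℕ → (Fin d → ℝ)) (y : ℕ → ℝ)
    (ell : ℕ → (Fin d → ℝ) → ℝ)
    (hell : ∀ t θ, ell t θ = (1 / 2) * (A t ⬝ᵥ θ - y t) ^ 2)
    (V : ℕ → Matrix (Fin d) (Fin d) ℝ)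
    (hV : ∀ t, V t = lam • (1 : Matrix (Fin d) (Fin d) ℝ)
      + ∑ s ∈ Finset.Icc 1 t, vecMulVec (A s) (A s))
    (θhat : ℕ → (Fin d → ℝ)) (hθ0 : θhat 0 = 0)
    (hmin : ∀ t θ,
      (lam / 2) * (θhat t ⬝ᵥ θhat t) + ∑ s ∈ Finset.Icc 1 t, ell s (θhat t)
        ≤ (lam / 2) * (θ ⬝ᵥ θ) + ∑ s ∈ Finset.Icc 1 t, ell s θ)
    (θstar : Fin d → ℝ) :
    ∑ t ∈ Finset.Icc 1 n, (ell t (θhat (t - 1)) - ell t θstar) =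
      (lam / 2) * (θstar ⬝ᵥ θstar)
        + ∑ t ∈ Finset.Icc 1 n, ell t (θhat (t - 1)) * (A t ⬝ᵥ ((V t)⁻¹ *ᵥ A t))
        - (1 / 2) * ((θhat n - θstar) ⬝ᵥ (V n *ᵥ (θhat n - θstar))) := by
  obtain rfl : ell = sqLoss A y := funext fun t => funext (hell t)
  obtain rfl : V = ridgeGram lam A := funext hV
  exact ridge_regret_eq hlam hθ0 hmin θstar n
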